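/- There exists a C^∞ smooth, 2π-periodic function p : ℝ → ℝ with p(θ) + p''(θ) > 0 for all θ such that equality holds in the inequality 3∫₀^{2π} ρ(θ)² dθ + (32π − 38)A + (π − 1)∫₀^{2π} ρ_β(θ)² dθ ≥ ((8π − 8)/π)L² + (8 − 2π)|Ã|, while ∫₀^{2π} |p(θ) − p_S(θ)|² dθ > 0 (so K is not a disk); consequently there is no constant C > 0 such that ∫₀^{2π} |p(θ) − p_S(θ)|² dθ ≤ C·(3∫₀^{2π}ρ(θ)²dθ + (32π − 38)A + (π − 1)∫₀^{2π}ρ_β(θ)²dθ − ((8π − 8)/π)L² − (8 − 2π)|Ã|) for all admissible p, i.e. this inequality is unstable in the L² distance to the Steiner disk. -/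

import Mathlib

open MeasureTheory

noncomputable section

def curvR (p : ℝ → ℝ) : ℝ → ℝ := fun θ => p θ + iteratedDeriv 2 p θ

def lenP (p : ℝ → ℝ) : ℝ := ∫ θ in (0:ℝ)..(2 * Real.pi), curvR p θ

def areaP (p : ℝ → ℝ) : ℝ := (1 / 2) * ∫ θ in (0:ℝ)..(2 * Real.pi), (p θ ^ 2 - deriv p θ ^ 2)

def areaTildeP (p : ℝ → ℝ) : ℝ :=
  (1 / 2) * ∫ θ in (0:ℝ)..(2 * Real.pi), (deriv p θ ^ 2 - iteratedDeriv 2 p θ ^ 2)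

def rhoBetaP (p : ℝ → ℝ) : ℝ → ℝ := fun θ => |deriv p θ + iteratedDeriv 3 p θ|

def steinerSupp (p : ℝ → ℝ) : ℝ → ℝ := fun θ =>
  lenP p / (2 * Real.pi)
    + ((1 / Real.pi) * ∫ t in (0:ℝ)..(2 * Real.pi), p t * Real.cos t) * Real.cos θ
    + ((1 / Real.pi) * ∫ t in (0:ℝ)..(2 * Real.pi), p t * Real.sin t) * Real.sin θ

/-- LHS minus RHS of inequality (3.4). -/
def defectP (p : ℝ → ℝ) : ℝ :=
  3 * (∫ θ in (0:ℝ)..(2 * Real.pi), curvR p θ ^ 2) + (32 * Real.pi - 38) * areaP p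
    + (Real.pi - 1) * (∫ θ in (0:ℝ)..(2 * Real.pi), rhoBetaP p θ ^ 2)
    - ((8 * Real.pi - 8) / Real.pi) * lenP p ^ 2 - (8 - 2 * Real.pi) * |areaTildeP p|

/-- Squared L² distance to the Steiner disk. -/
def h2sqP (p : ℝ → ℝ) : ℝ := ∫ θ in (0:ℝ)..(2 * Real.pi), |p θ - steinerSupp p θ| ^ 2

/- Auxiliary lemmas -/

lemma hS' (k θ : ℝ) : HasDerivAt (fun x : ℝ => Real.sin (k * x)) (k * Real.cos (k * θ)) θ := by
  have h := (Real.hasDerivAt_sin (k*θ)).comp θ ((hasDerivAt_id θ).const_mul k)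
  exact h.congr_deriv (by simp [mul_comm])

lemma hC' (k θ : ℝ) : HasDerivAt (fun x : ℝ => Real.cos (k * x)) (-(k * Real.sin (k * θ))) θ := by
  have h := (Real.hasDerivAt_cos (k*θ)).comp θ ((hasDerivAt_id θ).const_mul k)
  exact h.congr_deriv (by simp [mul_comm])

lemma master (α β1 β2 β3 β4 γ1 γ3 : ℝ) (f : ℝ → ℝ) (hcont : Continuous f)
    (hf : ∀ θ : ℝ, f θ = α + β1 * Real.cos θ + β2 * (2 * Real.cos (2*θ))
      + β3 * (3 * Real.cos (3*θ)) + β4 * (4 * Real.cos (4*θ))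
      + γ1 * (-Real.sin θ) + γ3 * (-(3 * Real.sin (3*θ)))) :
    ∫ θ in (0:ℝ)..(2*Real.pi), f θ = 2 * Real.pi * α := by
  have key : ∀ θ ∈ Set.uIcc (0:ℝ) (2*Real.pi), HasDerivAt
      (fun x => α*x + β1*Real.sin x + β2*Real.sin (2*x) + β3*Real.sin (3*x)
        + β4*Real.sin (4*x) + γ1*Real.cos x + γ3*Real.cos (3*x)) (f θ) θ := by
    intro θ _
    have h := ((((((((hasDerivAt_id θ).const_mul α).add
      ((Real.hasDerivAt_sin θ).const_mul β1)).add ((hS' 2 θ).const_mul β2)).add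
      ((hS' 3 θ).const_mul β3)).add ((hS' 4 θ).const_mul β4)).add
      ((Real.hasDerivAt_cos θ).const_mul γ1)).add ((hC' 3 θ).const_mul γ3))
    exact h.congr_deriv (by rw [hf θ]; ring)
  rw [intervalIntegral.integral_eq_sub_of_hasDerivAt key (hcont.intervalIntegrable _ _)]
  have e4 : Real.sin (2*(2*Real.pi)) = 0 := by
    rw [show 2*(2*Real.pi) = (4:ℕ)*Real.pi by push_cast; ring]; exact Real.sin_nat_mul_pi 4
  have e6 : Real.sin (3*(2*Real.pi)) = 0 := by
    rw [show 3*(2*Real.pi) = (6:ℕ)*Real.pi by push_cast; ring]; exact Real.sin_nat_mul_pi 6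
  have e8 : Real.sin (4*(2*Real.pi)) = 0 := by
    rw [show 4*(2*Real.pi) = (8:ℕ)*Real.pi by push_cast; ring]; exact Real.sin_nat_mul_pi 8
  have c6 : Real.cos (3*(2*Real.pi)) = 1 := by
    rw [show 3*(2*Real.pi) = (3:ℕ)*(2*Real.pi) by push_cast; ring]
    exact Real.cos_nat_mul_two_pi 3
  simp [Real.sin_two_pi, Real.cos_two_pi, e4, e6, e8, c6]
  ring

def pw : ℝ → ℝ := fun θ => 4 + Real.cos (2*θ)

lemma pw_d1 : deriv pw = fun θ => -(2 * Real.sin (2*θ)) := by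
  funext θ
  exact (((hC' 2 θ).const_add 4)).deriv

lemma pw_d2 : iteratedDeriv 2 pw = fun θ => -(4 * Real.cos (2*θ)) := by
  have h2 : iteratedDeriv 2 pw = deriv (deriv pw) := by
    rw [iteratedDeriv_succ, iteratedDeriv_one]
  rw [h2, pw_d1]
  funext θ
  have h : HasDerivAt (fun x => -(2 * Real.sin (2*x))) (-(4 * Real.cos (2*θ))) θ := by
    have := ((hS' 2 θ).const_mul (2:ℝ)).neg
    exact this.congr_deriv (by ring)
  exact h.deriv

lemma pw_d3 : iteratedDeriv 3 pw = fun θ => 8 * Real.sin (2*θ) := by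
  have h3 : iteratedDeriv 3 pw = deriv (iteratedDeriv 2 pw) := iteratedDeriv_succ
  rw [h3, pw_d2]
  funext θ
  have h : HasDerivAt (fun x => -(4 * Real.cos (2*x))) (8 * Real.sin (2*θ)) θ := by
    have := ((hC' 2 θ).const_mul (4:ℝ)).neg
    exact this.congr_deriv (by ring)
  exact h.deriv

lemma pw_smooth : ContDiff ℝ (⊤ : ℕ∞) pw :=
  contDiff_const.add (Real.contDiff_cos.comp (contDiff_const.mul contDiff_id))

lemma pw_cont : Continuous pw := pw_smooth.continuous

lemma pw_curv : curvR pw = fun θ => 4 - 3 * Real.cos (2*θ) := by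
  funext θ
  simp only [curvR, pw_d2, pw]
  ring

lemma cos4 (θ : ℝ) : Real.cos (4*θ) = 2 * Real.cos (2*θ)^2 - 1 := by
  rw [show (4:ℝ)*θ = 2*(2*θ) by ring]; exact Real.cos_two_mul _

lemma cos3 (θ : ℝ) : Real.cos (3*θ) = Real.cos (2*θ) * Real.cos θ - Real.sin (2*θ) * Real.sin θ := by
  rw [show (3:ℝ)*θ = 2*θ + θ by ring]; exact Real.cos_add _ _

lemma sin3 (θ : ℝ) : Real.sin (3*θ) = Real.sin (2*θ) * Real.cos θ + Real.cos (2*θ) * Real.sin θ := by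
  rw [show (3:ℝ)*θ = 2*θ + θ by ring]; exact Real.sin_add _ _

lemma pw_len : lenP pw = 8 * Real.pi := by
  have := master 4 0 (-3/2) 0 0 0 0 (curvR pw)
    (by rw [pw_curv]; continuity)
    (by intro θ; rw [pw_curv]; ring)
  rw [lenP, this]; ring

lemma pw_curv2 : (∫ θ in (0:ℝ)..(2*Real.pi), curvR pw θ ^ 2) = 41 * Real.pi := by
  have := master (41/2) 0 (-12) 0 (9/8) 0 0 (fun θ => curvR pw θ ^ 2)
    (by rw [pw_curv]; continuity)
    (by intro θ; rw [pw_curv]; simp only; linear_combination (-9/2) * cos4 θ)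
  rw [this]; ring

lemma pw_area : areaP pw = 29 * Real.pi / 2 := by
  have := master (29/2) 0 4 0 (5/8) 0 0 (fun θ => pw θ ^ 2 - deriv pw θ ^ 2)
    (by rw [pw_d1]; simp only [pw]; continuity)
    (by
      intro θ; rw [pw_d1]; simp only [pw]
      linear_combination (-5/2) * cos4 θ - 4 * Real.sin_sq_add_cos_sq (2*θ))
  rw [areaP, this]; ring

lemma pw_areaTilde : areaTildeP pw = -(6 * Real.pi) := by
  have := master (-6) 0 0 0 (-5/2) 0 0
      (fun θ => deriv pw θ ^ 2 - iteratedDeriv 2 pw θ ^ 2)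
    (by rw [pw_d1, pw_d2]; continuity)
    (by
      intro θ; rw [pw_d1, pw_d2]; simp only
      linear_combination 10 * cos4 θ + 4 * Real.sin_sq_add_cos_sq (2*θ))
  rw [areaTildeP, this]; ring

lemma pw_rb2 : (∫ θ in (0:ℝ)..(2*Real.pi), rhoBetaP pw θ ^ 2) = 36 * Real.pi := by
  have := master 18 0 0 0 (-9/2) 0 0 (fun θ => rhoBetaP pw θ ^ 2)
    (by
      simp only [rhoBetaP, pw_d1, pw_d3]
      continuity)
    (by
      intro θ; simp only [rhoBetaP, pw_d1, pw_d3, sq_abs]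
      linear_combination 18 * cos4 θ + 36 * Real.sin_sq_add_cos_sq (2*θ))
  rw [this]; ring

lemma pw_pcos : (∫ t in (0:ℝ)..(2*Real.pi), pw t * Real.cos t) = 0 := by
  have := master 0 (9/2) 0 (1/6) 0 0 0 (fun t => pw t * Real.cos t)
    (by simp only [pw]; continuity)
    (by
      intro θ; simp only [pw]
      rw [cos3 θ, Real.cos_two_mul, Real.sin_two_mul]
      linear_combination Real.cos θ * Real.sin_sq_add_cos_sq θ)
  rw [this]; ring

lemma pw_psin : (∫ t in (0:ℝ)..(2*Real.pi), pw t * Real.sin t) = 0 := by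
  have := master 0 0 0 0 0 (-7/2) (-1/6) (fun t => pw t * Real.sin t)
    (by simp only [pw]; continuity)
    (by
      intro θ; simp only [pw]
      rw [sin3 θ, Real.cos_two_mul, Real.sin_two_mul]
      ring)
  rw [this]; ring

lemma pw_steiner : steinerSupp pw = fun _ => 4 := by
  funext θ
  simp only [steinerSupp, pw_len, pw_pcos, pw_psin, mul_zero, zero_mul, add_zero]
  rw [div_eq_iff (by positivity : (2*Real.pi) ≠ 0)]
  ring

lemma pw_h2sq : h2sqP pw = Real.pi := by
  have := master (1/2) 0 0 0 (1/8) 0 0 (fun θ => |pw θ - steinerSupp pw θ| ^ 2)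
    (by simp only [pw_steiner, pw]; continuity)
    (by
      intro θ; simp only [pw_steiner, pw]
      rw [show (4:ℝ) + Real.cos (2*θ) - 4 = Real.cos (2*θ) by ring, sq_abs]
      linear_combination (-1/2) * cos4 θ)
  rw [h2sqP, this]; ring

lemma pw_defect : defectP pw = 0 := by
  have habs : |areaTildeP pw| = 6 * Real.pi := by
    rw [pw_areaTilde, abs_neg, abs_of_nonneg (by positivity)]
  rw [defectP, pw_curv2, pw_area, pw_rb2, pw_len, habs]
  have hπ : Real.pi ≠ 0 := Real.pi_ne_zero
  field_simp
  ring

theorem stmt19 :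
    (∃ p : ℝ → ℝ, ContDiff ℝ (⊤ : ℕ∞) p ∧ (∀ θ : ℝ, p (θ + 2 * Real.pi) = p θ) ∧
      (∀ θ : ℝ, 0 < curvR p θ) ∧ defectP p = 0 ∧ 0 < h2sqP p) ∧
    ¬∃ C : ℝ, 0 < C ∧ ∀ p : ℝ → ℝ, ContDiff ℝ (⊤ : ℕ∞) p →
      (∀ θ : ℝ, p (θ + 2 * Real.pi) = p θ) → (∀ θ : ℝ, 0 < curvR p θ) →
      h2sqP p ≤ C * defectP p := by
  have hper : ∀ θ : ℝ, pw (θ + 2 * Real.pi) = pw θ := by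
    intro θ
    simp only [pw]
    rw [show 2*(θ+2*Real.pi) = 2*θ + 2*Real.pi + 2*Real.pi by ring,
      Real.cos_add_two_pi, Real.cos_add_two_pi]
  have hpos : ∀ θ : ℝ, 0 < curvR pw θ := by
    intro θ
    rw [pw_curv]
    have := Real.cos_le_one (2*θ)
    simp only
    linarith
  have hh2 : 0 < h2sqP pw := by rw [pw_h2sq]; exact Real.pi_pos
  refine ⟨⟨pw, pw_smooth, hper, hpos, pw_defect, hh2⟩, ?_⟩
  rintro ⟨C, hC, hall⟩
  have h := hall pw pw_smooth hper hpos
  rw [pw_defect, mul_zero] at h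
  linarith
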